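/- In the trading graph constructed by the reduction from 3D-matching, if the maximum 3D-matching of the source instance has size d, then every execution performs at most 7n + d exchanges. -/

import Mathlib

structure TState (N M : Type) where
  own : N → Finset M
  dem : N → Finset M

variable {N M : Type} [DecidableEq N] [DecidableEq M]

/-- In a trading cycle `c = [(i₁,j₁),…,(i_k,j_k)]`, agent `i_t` receives item `j_t`;
`gives c` pairs each agent with the item he gives, namely `j_{t-1}` (cyclically). -/
def gives (c : List (N × M)) : List (N × M) :=
  (c.map Prod.fst).zip ((c.rotate (c.length - 1)).map Prod.snd)

/-- A valid cycle step: nonempty, visits each agent and each item at most once,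
every participating agent receives an item he currently demands and gives an item
he currently owns. -/
def ValidCycle (s : TState N M) (c : List (N × M)) : Prop :=
  c ≠ [] ∧ (c.map Prod.fst).Nodup ∧ (c.map Prod.snd).Nodup ∧
    (∀ p ∈ c, p.2 ∈ s.dem p.1) ∧ (∀ p ∈ gives c, p.2 ∈ s.own p.1)

/-- The state after executing a cycle: every used demand edge is reversed into a
supply edge (the received item moves into the agent's supply and leaves his demand),
and every used supply edge is removed. -/
def stepCycle (s : TState N M) (c : List (N × M)) : TState N M where
  own i := ((s.own i).filter fun j => (i, j) ∉ gives c) ∪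
      ((c.filter fun p => decide (p.1 = i)).map Prod.snd).toFinset
  dem i := (s.dem i).filter fun j => (i, j) ∉ c

/-- An execution is a sequence of cycle steps, each valid in the successively
updated state. -/
def ValidExec (s : TState N M) : List (List (N × M)) → Prop
  | [] => True
  | c :: r => ValidCycle s c ∧ ValidExec (stepCycle s c) r

/-- Total number of exchanges (items received) in an execution. -/
def exchanges (r : List (List (N × M))) : ℕ := (r.map List.length).sum

/-- Number of items agent `i` receives during execution `r`. -/
def receivedCount (r : List (List (N × M))) (i : N) : ℕ :=
  (r.map fun c => c.countP fun p => decide (p.1 = i)).sum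

/-- Number of items agent `i` gives during execution `r`. -/
def givenCount (r : List (List (N × M))) (i : N) : ℕ :=
  (r.map fun c => (gives c).countP fun p => decide (p.1 = i)).sum

/-- A static execution allocates each item at most once. -/
def StaticExec (r : List (List (N × M))) : Prop := (r.flatten.map Prod.snd).Nodup

/-- Agents of the reduction from 3D-matching: `ga t 0, ga t 1, ga t 2` are the
gadget agents `(xyz)₂, (xyz)₄, (xyz)₆` for the triple `t = (x,y,z)`; `ya y = y₂`,
`za z = z₁`, `xa1 x = x₁`, `xa3 x = x₃`. -/
inductive RAg (n : ℕ) where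
  | ga : (Fin n × Fin n × Fin n) → Fin 3 → RAg n
  | ya : Fin n → RAg n
  | za : Fin n → RAg n
  | xa1 : Fin n → RAg n
  | xa3 : Fin n → RAg n
deriving DecidableEq

/-- Items of the reduction: `gi t 0, gi t 1, gi t 2, gi t 3` are the gadget items
`(xyz)₁, (xyz)₃, (xyz)₅, (xyz)₇`; `yi y = y₁`, `zi z = z₂`, `xi x = x₂`. -/
inductive RIt (n : ℕ) where
  | gi : (Fin n × Fin n × Fin n) → Fin 4 → RIt n
  | yi : Fin n → RIt n
  | zi : Fin n → RIt n
  | xi : Fin n → RIt n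
deriving DecidableEq

/-- Supply sets of the reduction instance built from the triple set `T`. -/
def RS (n : ℕ) (T : Finset (Fin n × Fin n × Fin n)) : RAg n → Finset (RIt n)
  | .ga t i => if t ∈ T then {.gi t i.castSucc} else ∅
  | .ya y => {.yi y}
  | .za z => (T.filter fun t => t.2.2 = z).image fun t => .gi t 3
  | .xa1 _ => Finset.univ.image RIt.zi
  | .xa3 x => {.xi x}

/-- Demand sets of the reduction instance built from the triple set `T`. -/
def RD (n : ℕ) (T : Finset (Fin n × Fin n × Fin n)) : RAg n → Finset (RIt n)
  | .ga t i =>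
      if t ∈ T then
        (if i = 0 then {.gi t 1, .gi t 3}
         else if i = 1 then {.yi t.2.1}
         else {.gi t 3})
      else ∅
  | .ya y => (T.filter fun t => t.2.1 = y).image fun t => .gi t 2
  | .za z => {.zi z}
  | .xa1 x => {.xi x}
  | .xa3 x => (T.filter fun t => t.1 = x).image fun t => .gi t 0

/-- Whether a demand edge (agent receives item) belongs to the class
`E₀ = {(x₁, x₂)}`. -/
def isE0 {n : ℕ} : RAg n × RIt n → Bool
  | (.xa1 x, .xi x') => x == x'
  | _ => false

/-- Whether a demand edge belongs to the class `E₆ = {((xyz)₂, (xyz)₇)}`. -/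
def isE6 {n : ℕ} : RAg n × RIt n → Bool
  | (.ga t i, .gi t' j) => t == t' && i == 0 && j == 3
  | _ => false

/-- The number of large `X`-cycles in an execution: cycle steps using an `E₀` edge
but no `E₆` edge. -/
def numLarge {n : ℕ} (r : List (List (RAg n × RIt n))) : ℕ :=
  r.countP fun c => (c.countP isE0 != 0) && (c.countP isE6 == 0)

/-- The number of `Y`-cycles in an execution: cycle steps using no `E₀` edge. -/
def numY {n : ℕ} (r : List (List (RAg n × RIt n))) : ℕ :=
  r.countP fun c => c.countP isE0 == 0

/-- A set of triples is a partial 3D-matching: pairwise disjoint in each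
coordinate. -/
def IsPartialMatching {n : ℕ} (S : Finset (Fin n × Fin n × Fin n)) : Prop :=
  ∀ t ∈ S, ∀ t' ∈ S, t ≠ t' →
    t.1 ≠ t'.1 ∧ t.2.1 ≠ t'.2.1 ∧ t.2.2 ≠ t'.2.2

/-!
Every exchange of a step is charged to the movement, in that step, of a key item: `x₂`, `y₁` or
`z₂` for an element, or `(xyz)₇` passed on by `(xyz)₂` for a triple. Each key item moves in at
most one step, and one movement pays for at most 2 exchanges for `x₂` (the receipts of `x₂` and
by `x₃`), 3 for `y₁` (the receipts of `y₁`, by `y₂` and of an `(xyz)₃`), 2 for `z₂` (the receipts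
of `z₂` and of the item `z₁` gives) and 1 for `(xyz)₇`. This bounds the exchanges by `7n` plus
the number of triples whose `(xyz)₇` is passed on, i.e. of the paper's `Y`-cycles. Such a triple
has an earlier step where `x₂` and `z₂` move on its behalf (its small `X`-cycle) and a step where
`y₁` does; since an agent trades at most once per step, two such triples sharing a coordinate
would move one key item twice. So they form a 3D-matching, of size at most `d`.
-/

namespace List

variable {α : Type*}

lemma countP_le_one_of_eq {l : List α} {p : α → Bool} (hl : l.Nodup)
    (h : ∀ a ∈ l, ∀ b ∈ l, p a → p b → a = b) : l.countP p ≤ 1 := by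
  classical
  rw [countP_eq_length_filter, ← toFinset_card_of_nodup (hl.filter p), Finset.card_le_one]
  simp only [mem_toFinset, mem_filter]
  exact fun a ha b hb => h a ha.1 b hb.1 ha.2 hb.2

lemma countP_le_add_countP {l : List α} {p q r : α → Bool} (h : ∀ a ∈ l, p a → q a ∨ r a) :
    l.countP p ≤ l.countP q + l.countP r := by
  induction l with
  | nil => simp
  | cons a l ih =>
    have := ih fun b hb => h b (mem_cons_of_mem a hb)
    have ha := h a mem_cons_self
    simp only [countP_cons]
    split_ifs <;> simp_all <;> omega

lemma length_eq_sum_countP {K : Type*} [Fintype K] [DecidableEq K] (l : List α) (f : α → K) :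
    l.length = ∑ k, l.countP (f · = k) := by
  induction l with
  | nil => simp
  | cons a l ih => simp [countP_cons, Finset.sum_add_distrib, ← ih]

lemma eq_of_countP_le_one {l : List α} {p : α → Bool} {a b : α}
    (h : l.countP p ≤ 1) (ha : a ∈ l) (hb : b ∈ l) (hpa : p a) (hpb : p b) : a = b := by
  classical
  by_contra hab
  have hsub : ({a, b} : Finset α) ⊆ (l.filter p).toFinset := by
    simp [Finset.insert_subset_iff, ha, hb, hpa, hpb]
  have := (Finset.card_le_card hsub).trans (l.filter p).toFinset_card_le
  rw [Finset.card_pair hab, ← countP_eq_length_filter] at this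
  omega

end List

lemma sum_length_le_of_charge {α K : Type*} [Fintype K] [DecidableEq K] {r : List (List α)}
    (key : List α → α → K) (w : K → ℕ) (E : K → List α → Bool)
    (hw : ∀ c ∈ r, ∀ k, c.countP (key c · = k) ≤ w k)
    (hE : ∀ c ∈ r, ∀ p ∈ c, E (key c p) c) :
    (r.map List.length).sum ≤ ∑ k, w k * r.countP (E k) := by
  induction r with
  | nil => simp
  | cons c r ih =>
    have hc : c.length ≤ ∑ k, w k * if E k c then 1 else 0 := by
      rw [c.length_eq_sum_countP (key c)]
      refine Finset.sum_le_sum fun k _ => ?_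
      by_cases hk : E k c
      · simpa [hk] using hw c List.mem_cons_self k
      · have : c.countP (key c · = k) = 0 := List.countP_eq_zero.2 fun p hp hpk =>
          hk (of_decide_eq_true hpk ▸ hE c List.mem_cons_self p hp)
        simp [this]
    have := ih (fun c' hc' => hw c' (List.mem_cons_of_mem c hc'))
      (fun c' hc' => hE c' (List.mem_cons_of_mem c hc'))
    simp only [List.map_cons, List.sum_cons, List.countP_cons, mul_add, Finset.sum_add_distrib]
    omega

section Trading

variable {α β : Type} {s s₀ : TState α β} {c : List (α × β)} {g i i' : α} {j j' : β}

lemma gives_map_fst (c : List (α × β)) : (gives c).map Prod.fst = c.map Prod.fst :=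
  List.map_fst_zip (by simp)

lemma gives_map_snd_perm (c : List (α × β)) :
    ((gives c).map Prod.snd).Perm (c.map Prod.snd) := by
  rw [gives, List.map_snd_zip (by simp)]
  exact (c.rotate_perm _).map _

lemma exists_giver (h : (i, j) ∈ c) : ∃ g, (g, j) ∈ gives c := by
  simpa using (gives_map_snd_perm c).mem_iff.2 (List.mem_map_of_mem (f := Prod.snd) h)

lemma exists_receiver (h : (g, j) ∈ gives c) : ∃ i, (i, j) ∈ c := by
  simpa using (gives_map_snd_perm c).mem_iff.1 (List.mem_map_of_mem (f := Prod.snd) h)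

lemma exists_gift (h : (i, j) ∈ c) : ∃ j', (i, j') ∈ gives c := by
  have : i ∈ (gives c).map Prod.fst := gives_map_fst c ▸ List.mem_map_of_mem (f := Prod.fst) h
  simpa using this

lemma exists_receipt (h : (g, j) ∈ gives c) : ∃ j', (g, j') ∈ c := by
  have : g ∈ c.map Prod.fst := gives_map_fst c ▸ List.mem_map_of_mem (f := Prod.fst) h
  simpa using this

namespace ValidCycle

lemma mem_dem (hc : ValidCycle s c) (h : (i, j) ∈ c) : j ∈ s.dem i := hc.2.2.2.1 _ h

lemma mem_own (hc : ValidCycle s c) (h : (g, j) ∈ gives c) : j ∈ s.own g := hc.2.2.2.2 _ h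

lemma snd_eq (hc : ValidCycle s c) (h : (i, j) ∈ c) (h' : (i, j') ∈ c) : j = j' :=
  congrArg Prod.snd (List.inj_on_of_nodup_map hc.2.1 h h' rfl)

lemma fst_eq (hc : ValidCycle s c) (h : (i, j) ∈ c) (h' : (i', j) ∈ c) : i = i' :=
  congrArg Prod.fst (List.inj_on_of_nodup_map hc.2.2.1 h h' rfl)

lemma snd_eq_of_mem_gives (hc : ValidCycle s c) (h : (g, j) ∈ gives c)
    (h' : (g, j') ∈ gives c) : j = j' := by
  have hnd : ((gives c).map Prod.fst).Nodup := gives_map_fst c ▸ hc.2.1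
  exact congrArg Prod.snd (List.inj_on_of_nodup_map hnd h h' rfl)

lemma countP_fst_eq_le_one [DecidableEq α] (hc : ValidCycle s c) (i : α) :
    c.countP (fun p => p.1 = i) ≤ 1 :=
  List.countP_le_one_of_eq hc.2.1.of_map fun p hp q hq hpi hqi =>
    List.inj_on_of_nodup_map hc.2.1 hp hq (by simp_all)

lemma countP_snd_eq_le_one [DecidableEq β] (hc : ValidCycle s c) (j : β) :
    c.countP (fun p => p.2 = j) ≤ 1 :=
  List.countP_le_one_of_eq hc.2.1.of_map fun p hp q hq hpj hqj =>
    List.inj_on_of_nodup_map hc.2.2.1 hp hq (by simp_all)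

end ValidCycle

variable [DecidableEq α] [DecidableEq β]

lemma mem_own_stepCycle :
    j ∈ (stepCycle s c).own i ↔ (j ∈ s.own i ∧ (i, j) ∉ gives c) ∨ (i, j) ∈ c := by
  simp only [stepCycle, Finset.mem_union, Finset.mem_filter, List.mem_toFinset, List.mem_map,
    List.mem_filter, decide_eq_true_eq]
  constructor
  · rintro (h | ⟨⟨i', j'⟩, ⟨hp, rfl⟩, rfl⟩)
    exacts [Or.inl h, Or.inr hp]
  · rintro (h | h)
    exacts [Or.inl h, Or.inr ⟨(i, j), ⟨h, rfl⟩, rfl⟩]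

lemma mem_dem_stepCycle : j ∈ (stepCycle s c).dem i ↔ j ∈ s.dem i ∧ (i, j) ∉ c := by
  simp [stepCycle]

inductive Reachable (s₀ : TState α β) : TState α β → Prop
  | refl : Reachable s₀ s₀
  | step {t : TState α β} {d : List (α × β)} :
      Reachable s₀ t → ValidCycle t d → Reachable s₀ (stepCycle t d)

lemma Reachable.dem_subset (hs : Reachable s₀ s) (i : α) : s.dem i ⊆ s₀.dem i := by
  induction hs with
  | refl => rfl
  | step _ _ ih => exact (Finset.filter_subset _ _).trans ih

lemma Reachable.own_subset (hs : Reachable s₀ s) (i : α) :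
    s.own i ⊆ s₀.own i ∪ (s₀.dem i \ s.dem i) := by
  induction hs with
  | refl => exact Finset.subset_union_left
  | @step s c hs hc ih =>
    intro j hj
    simp only [Finset.mem_union, Finset.mem_sdiff, mem_dem_stepCycle, not_and, not_not]
    rcases mem_own_stepCycle.1 hj with ⟨hj, -⟩ | hj
    · rcases Finset.mem_union.1 (ih hj) with h | h
      · exact Or.inl h
      · exact Or.inr ⟨(Finset.mem_sdiff.1 h).1, fun h' => absurd h' (Finset.mem_sdiff.1 h).2⟩
    · exact Or.inr ⟨hs.dem_subset i (hc.mem_dem hj), fun _ => hj⟩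

lemma ValidCycle.exists_demands_of_mem_gives (hs : Reachable s₀ s) (hc : ValidCycle s c)
    (hg : (g, j) ∈ gives c) (hj : j ∉ s₀.own g) :
    j ∉ s.dem g ∧ j ∈ s₀.dem g ∧ (∃ i ≠ g, j ∈ s₀.dem i) ∧ ∃ j' ≠ j, j' ∈ s₀.dem g := by
  have hown := hs.own_subset g (hc.mem_own hg)
  simp only [Finset.mem_union, hj, false_or, Finset.mem_sdiff] at hown
  obtain ⟨i, hi⟩ := exists_receiver hg
  obtain ⟨j', hj'⟩ := exists_receipt hg
  refine ⟨hown.2, hown.1, ⟨i, ?_, hs.dem_subset i (hc.mem_dem hi)⟩,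
    ⟨j', ?_, hs.dem_subset g (hc.mem_dem hj')⟩⟩
  · rintro rfl
    exact hown.2 (hc.mem_dem hi)
  · rintro rfl
    exact hown.2 (hc.mem_dem hj')

variable {r : List (List (α × β))}

lemma ValidExec.exists_reachable (hs : Reachable s₀ s) (hr : ValidExec s r) (hc : c ∈ r) :
    ∃ s', Reachable s₀ s' ∧ ValidCycle s' c := by
  induction r generalizing s with
  | nil => simp at hc
  | cons c' r ih =>
    rcases List.mem_cons.1 hc with rfl | hc
    exacts [⟨s, hs, hr.1⟩, ih (hs.step hr.1) hr.2 hc]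

lemma ValidExec.notMem (hr : ValidExec s r) {e : α × β} (he : e.2 ∉ s.dem e.1) (hc : c ∈ r) :
    e ∉ c := by
  induction r generalizing s with
  | nil => simp at hc
  | cons c₀ r ih =>
    rcases List.mem_cons.1 hc with rfl | hc
    · exact fun h => he (hr.1.mem_dem h)
    · exact ih hr.2 (fun h => he (mem_dem_stepCycle.1 h).1) hc

lemma ValidExec.exists_mem_of_mem_gives (hr : ValidExec s r) {e : α × β} (he : e.2 ∉ s.own e.1)
    (hc : c ∈ r) (h : e ∈ gives c) : ∃ c' ∈ r, e ∈ c' := by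
  induction r generalizing s with
  | nil => simp at hc
  | cons c₀ r ih =>
    by_cases he₀ : e ∈ c₀
    · exact ⟨c₀, List.mem_cons_self, he₀⟩
    rcases List.mem_cons.1 hc with rfl | hc
    · exact absurd (hr.1.mem_own h) he
    · obtain ⟨c', hc', he'⟩ :=
        ih hr.2 (fun h' => (mem_own_stepCycle.1 h').elim (fun h' => he h'.1) he₀) hc
      exact ⟨c', List.mem_cons_of_mem c₀ hc', he'⟩

lemma ValidExec.notMem_gives (hr : ValidExec s r) {e : α × β} (hown : e.2 ∉ s.own e.1)
    (hdem : e.2 ∉ s.dem e.1) (hc : c ∈ r) : e ∉ gives c := fun h => by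
  obtain ⟨c', hc', he⟩ := hr.exists_mem_of_mem_gives hown hc h
  exact hr.notMem hdem hc' he

lemma ValidExec.countP_mem_le_one (hr : ValidExec s r) (e : α × β) : r.countP (e ∈ ·) ≤ 1 := by
  induction r generalizing s with
  | nil => simp
  | cons c r ih =>
    by_cases hec : e ∈ c
    · have hrest : r.countP (e ∈ ·) = 0 := List.countP_eq_zero.2 fun c' hc' => by
        simpa using hr.2.notMem (fun h => (mem_dem_stepCycle.1 h).2 hec) hc'
      simp [hec, hrest]
    · simpa [hec] using ih hr.2

lemma ValidExec.countP_mem_gives_le_one (hr : ValidExec s r) {e : α × β}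
    (he : e.2 ∉ s.dem e.1) : r.countP (e ∈ gives ·) ≤ 1 := by
  induction r generalizing s with
  | nil => simp
  | cons c r ih =>
    have he' : e.2 ∉ (stepCycle s c).dem e.1 := fun h => he (mem_dem_stepCycle.1 h).1
    by_cases hec : e ∈ gives c
    · have hown : e.2 ∉ (stepCycle s c).own e.1 := fun h =>
        (mem_own_stepCycle.1 h).elim (fun h => h.2 hec) fun h => he (hr.1.mem_dem h)
      have hrest : r.countP (e ∈ gives ·) = 0 := List.countP_eq_zero.2 fun c' hc' => by
        simpa using hr.2.notMem_gives hown he' hc'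
      simp [hec, hrest]
    · simpa [hec] using ih hr.2 he'

end Trading

section Reduction

variable {n : ℕ} {T : Finset (Fin n × Fin n × Fin n)} {g i : RAg n} {j j' : RIt n}
  {t : Fin n × Fin n × Fin n} {x y z : Fin n}

lemma eq_of_xi_mem_RD (h : RIt.xi x ∈ RD n T i) : i = .xa1 x := by
  cases i <;> simp only [RD, Finset.mem_image, Finset.mem_filter] at h <;> aesop

lemma eq_of_zi_mem_RD (h : RIt.zi z ∈ RD n T i) : i = .za z := by
  cases i <;> simp only [RD, Finset.mem_image, Finset.mem_filter] at h <;> aesop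

lemma exists_eq_of_yi_mem_RD (h : RIt.yi y ∈ RD n T i) : ∃ t, t.2.1 = y ∧ i = .ga t 1 := by
  cases i <;> simp only [RD, Finset.mem_image, Finset.mem_filter] at h <;> aesop

lemma eq_of_gi_mem_RD {k : Fin 4} (h : RIt.gi t k ∈ RD n T i) : t ∈ T ∧
    (k = 0 ∧ i = .xa3 t.1 ∨ k = 1 ∧ i = .ga t 0 ∨ k = 2 ∧ i = .ya t.2.1 ∨
      k = 3 ∧ (i = .ga t 0 ∨ i = .ga t 2)) := by
  cases i <;> simp only [RD, Finset.mem_image, Finset.mem_filter] at h <;>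
    aesop (add safe (by omega))

lemma eq_of_mem_RD_ga_one (h : j ∈ RD n T (.ga t 1)) : j = .yi t.2.1 := by
  simp only [RD] at h; split_ifs at h <;> simp_all

lemma eq_of_mem_RD_ga_two (h : j ∈ RD n T (.ga t 2)) : j = .gi t 3 := by
  simp only [RD] at h; split_ifs at h <;> simp_all

lemma eq_of_yi_mem_RS (h : RIt.yi y ∈ RS n T g) : g = .ya y := by
  cases g <;> simp only [RS, Finset.mem_image, Finset.mem_filter] at h <;> aesop

lemma eq_of_mem_RS_ga {m : Fin 3} (h : j ∈ RS n T (.ga t m)) : j = .gi t m.castSucc := by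
  simp only [RS] at h; split_ifs at h <;> simp_all

lemma eq_of_gi_one_mem_RS (h : RIt.gi t 1 ∈ RS n T g) : g = .ga t 1 := by
  cases g with
  | ga u m =>
    obtain ⟨rfl, hm⟩ := RIt.gi.inj (eq_of_mem_RS_ga h)
    fin_cases m <;> simp_all
  | _ => simp [RS] at h

lemma eq_of_gi_three_mem_RS (h : RIt.gi t 3 ∈ RS n T g) : g = .za t.2.2 := by
  cases g with
  | ga u m =>
    obtain ⟨rfl, hm⟩ := RIt.gi.inj (eq_of_mem_RS_ga h)
    fin_cases m <;> simp_all
  | _ => aesop (add norm RS)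

lemma exists_eq_ga_zero_of_demands (hg : j ∈ RD n T g) (hi : j ∈ RD n T i) (hig : i ≠ g)
    (hj' : j' ∈ RD n T g) (hjj' : j' ≠ j) : ∃ t, g = .ga t 0 ∧ j = .gi t 3 := by
  cases j with
  | xi x => exact absurd ((eq_of_xi_mem_RD hi).trans (eq_of_xi_mem_RD hg).symm) hig
  | zi z => exact absurd ((eq_of_zi_mem_RD hi).trans (eq_of_zi_mem_RD hg).symm) hig
  | yi y =>
    obtain ⟨t, rfl, rfl⟩ := exists_eq_of_yi_mem_RD hg
    exact absurd (eq_of_mem_RD_ga_one hj') hjj'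
  | gi t k =>
    obtain ⟨-, hi'⟩ := eq_of_gi_mem_RD hi
    rcases (eq_of_gi_mem_RD hg).2 with ⟨rfl, rfl⟩ | ⟨rfl, rfl⟩ | ⟨rfl, rfl⟩ | ⟨rfl, rfl | rfl⟩
    · exact absurd (by simpa using hi') hig
    · exact absurd (by simpa using hi') hig
    · exact absurd (by simpa using hi') hig
    · exact ⟨t, rfl, rfl⟩
    · exact absurd (eq_of_mem_RD_ga_two hj') hjj'


variable {s : TState (RAg n) (RIt n)} {c : List (RAg n × RIt n)}
  (hs : Reachable ⟨RS n T, RD n T⟩ s) (hc : ValidCycle s c)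
include hs hc

lemma mem_RD_of_mem (h : (i, j) ∈ c) : j ∈ RD n T i :=
  hs.dem_subset i (hc.mem_dem h)

lemma mem_RS_of_mem_gives (hg : (g, j) ∈ gives c) :
    j ∈ RS n T g ∨ (g, j) ∉ c ∧ ∃ t, g = .ga t 0 ∧ j = .gi t 3 := by
  by_cases hj : j ∈ RS n T g
  · exact Or.inl hj
  obtain ⟨hjs, hj₀, ⟨i, hig, hi⟩, j', hjj', hj'⟩ := hc.exists_demands_of_mem_gives hs hg hj
  exact Or.inr ⟨fun h => hjs (hc.mem_dem h), exists_eq_ga_zero_of_demands hj₀ hi hig hj' hjj'⟩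

lemma xa1_mem_of_xa3_mem (h : (.xa3 x, j) ∈ c) : (.xa1 x, .xi x) ∈ c := by
  obtain ⟨j', hg⟩ := exists_gift h
  obtain rfl : j' = .xi x := by
    rcases mem_RS_of_mem_gives hs hc hg with h' | ⟨-, t, h', -⟩
    · simpa [RS] using h'
    · cases h'
  obtain ⟨i, hi⟩ := exists_receiver hg
  rwa [eq_of_xi_mem_RD (mem_RD_of_mem hs hc hi)] at hi

lemma za_mem_of_za_gives (h : (.za z, j) ∈ gives c) : (.za z, .zi z) ∈ c := by
  obtain ⟨j', hj'⟩ := exists_receipt h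
  obtain rfl : j' = .zi z := by simpa [RD] using mem_RD_of_mem hs hc hj'
  exact hj'

lemma ya_gives_of_yi_mem (h : (i, .yi y) ∈ c) : (.ya y, .yi y) ∈ gives c := by
  obtain ⟨g, hg⟩ := exists_giver h
  rcases mem_RS_of_mem_gives hs hc hg with h' | ⟨-, t, -, h'⟩
  · rwa [eq_of_yi_mem_RS h'] at hg
  · cases h'

lemma ya_gives_of_ya_mem (h : (.ya y, j) ∈ c) : (.ya y, .yi y) ∈ gives c := by
  obtain ⟨j', hg⟩ := exists_gift h
  rcases mem_RS_of_mem_gives hs hc hg with h' | ⟨-, t, h', -⟩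
  · rwa [show j' = .yi y by simpa [RS] using h'] at hg
  · cases h'

lemma ga_one_mem_of_gi_one_mem (h : (i, .gi t 1) ∈ c) : (.ga t 1, .yi t.2.1) ∈ c := by
  obtain ⟨g, hg⟩ := exists_giver h
  obtain rfl : g = .ga t 1 := by
    rcases mem_RS_of_mem_gives hs hc hg with h' | ⟨-, u, -, h'⟩
    · exact eq_of_gi_one_mem_RS h'
    · simp at h'
  obtain ⟨j', hj'⟩ := exists_receipt hg
  rwa [eq_of_mem_RD_ga_one (mem_RD_of_mem hs hc hj')] at hj'

lemma eq_za_or_eq_ga_of_gi_three_mem_gives (h : (g, .gi t 3) ∈ gives c) :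
    g = .za t.2.2 ∨ g = .ga t 0 := by
  rcases mem_RS_of_mem_gives hs hc h with h' | ⟨-, u, rfl, h'⟩
  · exact Or.inl (eq_of_gi_three_mem_RS h')
  · obtain ⟨rfl, -⟩ := RIt.gi.inj h'
    exact Or.inr rfl

lemma mem_of_ga_zero_gives (h : (.ga t 0, .gi t 3) ∈ gives c) :
    (.ga t 2, .gi t 3) ∈ c ∧ (.ya t.2.1, .gi t 2) ∈ c := by
  obtain ⟨i, hi⟩ := exists_receiver h
  obtain rfl : i = .ga t 2 := by
    have hnot : (.ga t 0, .gi t 3) ∉ c := by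
      rcases mem_RS_of_mem_gives hs hc h with h' | ⟨h', -⟩
      · simpa using eq_of_mem_RS_ga h'
      · exact h'
    have := (eq_of_gi_mem_RD (mem_RD_of_mem hs hc hi)).2
    simp only [Fin.reduceEq, false_and, true_and, false_or] at this
    rcases this with rfl | rfl
    exacts [absurd hi hnot, rfl]
  refine ⟨hi, ?_⟩
  obtain ⟨j', hg⟩ := exists_gift hi
  obtain rfl : j' = .gi t 2 := by
    rcases mem_RS_of_mem_gives hs hc hg with h' | ⟨-, u, h', -⟩
    · exact eq_of_mem_RS_ga h'
    · simp at h'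
  obtain ⟨i', hi'⟩ := exists_receiver hg
  obtain rfl : i' = .ya t.2.1 := by simpa using (eq_of_gi_mem_RD (mem_RD_of_mem hs hc hi')).2
  exact hi'

lemma mem_of_ga_zero_mem (h : (.ga t 0, .gi t 3) ∈ c) :
    (.xa3 t.1, .gi t 0) ∈ c ∧ (.za t.2.2, .gi t 3) ∈ gives c := by
  obtain ⟨j', hg⟩ := exists_gift h
  obtain rfl : j' = .gi t 0 := by
    rcases mem_RS_of_mem_gives hs hc hg with h' | ⟨hnot, u, hu, rfl⟩
    · exact eq_of_mem_RS_ga h'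
    · obtain ⟨rfl, -⟩ := RAg.ga.inj hu
      exact absurd h hnot
  obtain ⟨i, hi⟩ := exists_receiver hg
  obtain rfl : i = .xa3 t.1 := by simpa using (eq_of_gi_mem_RD (mem_RD_of_mem hs hc hi)).2
  refine ⟨hi, ?_⟩
  obtain ⟨g, hg'⟩ := exists_giver h
  rcases eq_za_or_eq_ga_of_gi_three_mem_gives hs hc hg' with rfl | rfl
  · exact hg'
  · cases hc.snd_eq_of_mem_gives hg hg'

end Reduction

section Charging

variable {n : ℕ} {T : Finset (Fin n × Fin n × Fin n)} {x y z : Fin n}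
  {t : Fin n × Fin n × Fin n}

/-- `.inl x`, `.inr (.inl y)`, `.inr (.inr (.inl z))`: the movement of the key item `x₂`, `y₁`,
`z₂`; `.inr (.inr (.inr t))`: `(xyz)₂` passing on `(xyz)₇`. -/
abbrev Charge (n : ℕ) := Fin n ⊕ Fin n ⊕ Fin n ⊕ (Fin n × Fin n × Fin n)

def chargeWeight : Charge n → ℕ
  | .inl _ => 2
  | .inr (.inl _) => 3
  | .inr (.inr (.inl _)) => 2
  | .inr (.inr (.inr _)) => 1

def chargeEvent : Charge n → List (RAg n × RIt n) → Bool
  | .inl x, c => (.xa1 x, .xi x) ∈ c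
  | .inr (.inl y), c => (.ya y, .yi y) ∈ gives c
  | .inr (.inr (.inl z)), c => (.za z, .zi z) ∈ c
  | .inr (.inr (.inr t)), c => (.ga t 0, .gi t 3) ∈ gives c

def charge (c : List (RAg n × RIt n)) : RAg n × RIt n → Charge n
  | (_, .xi x) => .inl x
  | (_, .yi y) => .inr (.inl y)
  | (_, .zi z) => .inr (.inr (.inl z))
  | (_, .gi t 0) => .inl t.1
  | (_, .gi t 1) | (_, .gi t 2) => .inr (.inl t.2.1)
  | (_, .gi t 3) =>
    if (.ga t 0, .gi t 3) ∈ gives c then .inr (.inr (.inr t)) else .inr (.inr (.inl t.2.2))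

section Cycle

variable {s : TState (RAg n) (RIt n)} {c : List (RAg n × RIt n)}
  (hs : Reachable ⟨RS n T, RD n T⟩ s) (hc : ValidCycle s c)
include hs hc

lemma chargeEvent_charge {p : RAg n × RIt n} (hp : p ∈ c) : chargeEvent (charge c p) c := by
  obtain ⟨i, j⟩ := p
  cases j with
  | xi x =>
    obtain rfl := eq_of_xi_mem_RD (mem_RD_of_mem hs hc hp)
    simpa [charge, chargeEvent] using hp
  | yi y => simpa [charge, chargeEvent] using ya_gives_of_yi_mem hs hc hp
  | zi z =>
    obtain rfl := eq_of_zi_mem_RD (mem_RD_of_mem hs hc hp)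
    simpa [charge, chargeEvent] using hp
  | gi t k =>
    rcases (eq_of_gi_mem_RD (mem_RD_of_mem hs hc hp)).2 with
      ⟨rfl, rfl⟩ | ⟨rfl, rfl⟩ | ⟨rfl, rfl⟩ | ⟨rfl, -⟩
    · simpa [charge, chargeEvent] using xa1_mem_of_xa3_mem hs hc hp
    · simpa [charge, chargeEvent] using
        ya_gives_of_yi_mem hs hc (ga_one_mem_of_gi_one_mem hs hc hp)
    · simpa [charge, chargeEvent] using ya_gives_of_ya_mem hs hc hp
    · by_cases hW : (.ga t 0, .gi t 3) ∈ gives c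
      · simp [charge, chargeEvent, hW]
      · obtain ⟨g, hg⟩ := exists_giver hp
        obtain rfl : g = .za t.2.2 :=
          (eq_za_or_eq_ga_of_gi_three_mem_gives hs hc hg).resolve_right fun h => hW (h ▸ hg)
        simpa [charge, chargeEvent, hW] using za_mem_of_za_gives hs hc hg

lemma charge_eq_x {p : RAg n × RIt n} (hp : p ∈ c) (h : charge c p = .inl x) :
    p.2 = .xi x ∨ p.1 = .xa3 x := by
  obtain ⟨i, j⟩ := p
  cases j with
  | gi u m =>
    rcases (eq_of_gi_mem_RD (mem_RD_of_mem hs hc hp)).2 with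
      ⟨rfl, rfl⟩ | ⟨rfl, rfl⟩ | ⟨rfl, rfl⟩ | ⟨rfl, -⟩ <;>
      simp only [charge] at h <;> (try split_ifs at h) <;> simp_all
  | _ => simp_all [charge]

lemma charge_eq_y {p : RAg n × RIt n} (hp : p ∈ c) (h : charge c p = .inr (.inl y)) :
    p.2 = .yi y ∨ p.1 = .ya y ∨
      ∃ u : Fin n × Fin n × Fin n, u.2.1 = y ∧ p = (.ga u 0, .gi u 1) := by
  obtain ⟨i, j⟩ := p
  cases j with
  | gi u m =>
    rcases (eq_of_gi_mem_RD (mem_RD_of_mem hs hc hp)).2 with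
      ⟨rfl, rfl⟩ | ⟨rfl, rfl⟩ | ⟨rfl, rfl⟩ | ⟨rfl, -⟩ <;>
      simp only [charge] at h <;> (try split_ifs at h) <;> simp_all
  | _ => simp_all [charge]

lemma charge_eq_z {p : RAg n × RIt n} (hp : p ∈ c) (h : charge c p = .inr (.inr (.inl z))) :
    p.2 = .zi z ∨ (.za z, p.2) ∈ gives c := by
  obtain ⟨i, j⟩ := p
  cases j with
  | gi u m =>
    rcases (eq_of_gi_mem_RD (mem_RD_of_mem hs hc hp)).2 with
      ⟨rfl, rfl⟩ | ⟨rfl, rfl⟩ | ⟨rfl, rfl⟩ | ⟨rfl, -⟩ <;>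
      simp only [charge] at h <;> (try split_ifs at h with hW) <;> simp at h
    obtain ⟨g, hg⟩ := exists_giver hp
    obtain rfl : g = .za u.2.2 :=
      (eq_za_or_eq_ga_of_gi_three_mem_gives hs hc hg).resolve_right fun h => hW (h ▸ hg)
    exact Or.inr (h ▸ hg)
  | _ => simp_all [charge]

lemma charge_eq_w {p : RAg n × RIt n} (hp : p ∈ c) (h : charge c p = .inr (.inr (.inr t))) :
    p.2 = .gi t 3 := by
  obtain ⟨i, j⟩ := p
  cases j with
  | gi u m =>
    rcases (eq_of_gi_mem_RD (mem_RD_of_mem hs hc hp)).2 with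
      ⟨rfl, rfl⟩ | ⟨rfl, rfl⟩ | ⟨rfl, rfl⟩ | ⟨rfl, -⟩ <;>
      simp only [charge] at h <;> (try split_ifs at h) <;> simp_all
  | _ => simp_all [charge]

lemma countP_ga_zero_gi_one_le_one (y : Fin n) : c.countP (fun p =>
    ∃ u : Fin n × Fin n × Fin n, u.2.1 = y ∧ p = (.ga u 0, .gi u 1)) ≤ 1 := by
  refine List.countP_le_one_of_eq hc.2.1.of_map ?_
  rintro _ hp _ hq hu hu'
  obtain ⟨u, rfl, rfl⟩ := of_decide_eq_true hu
  obtain ⟨u', hy, rfl⟩ := of_decide_eq_true hu'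
  obtain ⟨rfl, -⟩ := RAg.ga.inj <| hc.fst_eq (ga_one_mem_of_gi_one_mem hs hc hp)
    (hy ▸ ga_one_mem_of_gi_one_mem hs hc hq)
  rfl

lemma countP_charge_le (k : Charge n) :
    c.countP (fun p => charge c p = k) ≤ chargeWeight k := by
  rcases k with x | y | z | t
  · calc c.countP (fun p => charge c p = .inl x)
        ≤ c.countP (fun p => p.2 = .xi x) + c.countP (fun p => p.1 = .xa3 x) :=
          List.countP_le_add_countP fun p hp hk => by
            simpa using charge_eq_x hs hc hp (of_decide_eq_true hk)
      _ ≤ 1 + 1 := add_le_add (hc.countP_snd_eq_le_one _) (hc.countP_fst_eq_le_one _)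
  · calc c.countP (fun p => charge c p = .inr (.inl y))
        ≤ c.countP (fun p => p.2 = .yi y) + c.countP (fun p => p.1 = .ya y ∨
            ∃ u : Fin n × Fin n × Fin n, u.2.1 = y ∧ p = (.ga u 0, .gi u 1)) :=
          List.countP_le_add_countP fun p hp hk => by
            simpa only [decide_eq_true_eq] using charge_eq_y hs hc hp (of_decide_eq_true hk)
      _ ≤ c.countP (fun p => p.2 = .yi y) + (c.countP (fun p => p.1 = .ya y) +
            c.countP (fun p => ∃ u : Fin n × Fin n × Fin n,
              u.2.1 = y ∧ p = (.ga u 0, .gi u 1))) :=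
          Nat.add_le_add_left (List.countP_le_add_countP fun p _ h => by simpa using h) _
      _ ≤ 1 + (1 + 1) :=
          add_le_add (hc.countP_snd_eq_le_one _) (add_le_add (hc.countP_fst_eq_le_one _)
            (countP_ga_zero_gi_one_le_one hs hc y))
  · calc c.countP (fun p => charge c p = .inr (.inr (.inl z)))
        ≤ c.countP (fun p => p.2 = .zi z) + c.countP (fun p => (.za z, p.2) ∈ gives c) :=
          List.countP_le_add_countP fun p hp hk => by
            simpa using charge_eq_z hs hc hp (of_decide_eq_true hk)
      _ ≤ 1 + 1 := by
          refine add_le_add (hc.countP_snd_eq_le_one _) ?_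
          refine List.countP_le_one_of_eq hc.2.1.of_map fun p hp q hq hpz hqz => ?_
          exact List.inj_on_of_nodup_map hc.2.2.1 hp hq
            (hc.snd_eq_of_mem_gives (of_decide_eq_true hpz) (of_decide_eq_true hqz))
  · refine (List.countP_mono_left fun p hp hk => ?_).trans (hc.countP_snd_eq_le_one (.gi t 3))
    simpa using charge_eq_w hs hc hp (of_decide_eq_true hk)

end Cycle

end Charging

section Execution

variable {n : ℕ} {T : Finset (Fin n × Fin n × Fin n)} {t : Fin n × Fin n × Fin n}
  {r : List (List (RAg n × RIt n))}

def matchedTriples (r : List (List (RAg n × RIt n))) : Finset (Fin n × Fin n × Fin n) :=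
  Finset.univ.filter fun t => ∃ c ∈ r, (.ga t 0, .gi t 3) ∈ gives c

variable (hr : ValidExec ⟨RS n T, RD n T⟩ r)
include hr

lemma exchanges_le_sum_chargeWeight :
    exchanges r ≤ ∑ k, chargeWeight k * r.countP (chargeEvent k) := by
  refine sum_length_le_of_charge charge chargeWeight chargeEvent (fun c hc k => ?_)
    fun c hc p hp => ?_
  all_goals obtain ⟨s, hs, hc⟩ := hr.exists_reachable .refl hc
  exacts [countP_charge_le hs hc k, chargeEvent_charge hs hc hp]

lemma countP_chargeEvent_le_one (k : Charge n) : r.countP (chargeEvent k) ≤ 1 := by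
  rcases k with x | y | z | t
  · exact hr.countP_mem_le_one _
  · exact hr.countP_mem_gives_le_one (by simp [RD])
  · exact hr.countP_mem_le_one _
  · refine (List.countP_mono_left fun c hc hW => ?_).trans
      (hr.countP_mem_le_one (.ga t 2, .gi t 3))
    obtain ⟨s, hs, hc⟩ := hr.exists_reachable .refl hc
    simpa using (mem_of_ga_zero_gives hs hc (by simpa [chargeEvent] using hW)).1

lemma matchedTriples_subset : matchedTriples r ⊆ T := by
  intro t ht
  obtain ⟨c, hc, hW⟩ := (Finset.mem_filter.1 ht).2
  obtain ⟨s, hs, hc⟩ := hr.exists_reachable .refl hc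
  exact (eq_of_gi_mem_RD (mem_RD_of_mem hs hc (mem_of_ga_zero_gives hs hc hW).1)).1

lemma exists_cycles_of_mem_matchedTriples (ht : t ∈ matchedTriples r) :
    (∃ e ∈ r, ∃ s, ValidCycle s e ∧ (.xa3 t.1, .gi t 0) ∈ e ∧ (.xa1 t.1, .xi t.1) ∈ e ∧
      (.za t.2.2, .gi t 3) ∈ gives e ∧ (.za t.2.2, .zi t.2.2) ∈ e) ∧
    ∃ c ∈ r, ∃ s, ValidCycle s c ∧ (.ya t.2.1, .gi t 2) ∈ c ∧
      (.ya t.2.1, .yi t.2.1) ∈ gives c := by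
  obtain ⟨c, hc, hW⟩ := (Finset.mem_filter.1 ht).2
  have hown : RIt.gi t 3 ∉ RS n T (.ga t 0) := fun h => by simpa using eq_of_mem_RS_ga h
  obtain ⟨e, he, hWe⟩ := hr.exists_mem_of_mem_gives hown hc hW
  obtain ⟨s, hs, hc'⟩ := hr.exists_reachable .refl hc
  obtain ⟨s', hs', he'⟩ := hr.exists_reachable .refl he
  obtain ⟨hx, hz⟩ := mem_of_ga_zero_mem hs' he' hWe
  have hy := (mem_of_ga_zero_gives hs hc' hW).2
  exact ⟨⟨e, he, s', he', hx, xa1_mem_of_xa3_mem hs' he' hx, hz, za_mem_of_za_gives hs' he' hz⟩,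
    c, hc, s, hc', hy, ya_gives_of_ya_mem hs hc' hy⟩

lemma isPartialMatching_matchedTriples : IsPartialMatching (matchedTriples r) := by
  intro t ht t' ht' hne
  obtain ⟨⟨e, he, s, hve, hx, hX, hz, hZ⟩, c, hc, s₁, hvc, hy, hY⟩ :=
    exists_cycles_of_mem_matchedTriples hr ht
  obtain ⟨⟨e', he', s', hve', hx', hX', hz', hZ'⟩, c', hc', s₁', hvc', hy', hY'⟩ :=
    exists_cycles_of_mem_matchedTriples hr ht'
  refine ⟨fun h => hne ?_, fun h => hne ?_, fun h => hne ?_⟩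
  · rw [← h] at hx' hX'
    obtain rfl : e = e' := List.eq_of_countP_le_one (hr.countP_mem_le_one _) he he'
      (by simpa using hX) (by simpa using hX')
    exact (RIt.gi.inj (hve.snd_eq hx hx')).1
  · rw [← h] at hy' hY'
    obtain rfl : c = c' := List.eq_of_countP_le_one
      (hr.countP_mem_gives_le_one (e := (.ya t.2.1, .yi t.2.1)) (by simp [RD])) hc hc'
      (by simpa using hY) (by simpa using hY')
    exact (RIt.gi.inj (hvc.snd_eq hy hy')).1
  · rw [← h] at hz' hZ'
    obtain rfl : e = e' := List.eq_of_countP_le_one (hr.countP_mem_le_one _) he he'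
      (by simpa using hZ) (by simpa using hZ')
    exact (RIt.gi.inj (hve.snd_eq_of_mem_gives hz hz')).1

lemma sum_chargeWeight_le :
    ∑ k, chargeWeight k * r.countP (chargeEvent k) ≤ 7 * n + (matchedTriples r).card := by
  have helem (w : ℕ) (f : Fin n → Charge n) :
      ∑ v, w * r.countP (chargeEvent (f v)) ≤ w * n := by
    refine (Finset.sum_le_card_nsmul _ _ w fun v _ => ?_).trans (by simp [mul_comm])
    simpa using Nat.mul_le_mul_left w (countP_chargeEvent_le_one hr (f v))
  have htriple : ∑ t, 1 * r.countP (chargeEvent (.inr (.inr (.inr t)))) ≤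
      (matchedTriples r).card := by
    rw [← Finset.sum_filter_of_ne (p := fun t => ∃ c ∈ r, (.ga t 0, .gi t 3) ∈ gives c)]
    · refine (Finset.sum_le_card_nsmul _ _ 1 fun t _ => ?_).trans (by simp [matchedTriples])
      simpa using countP_chargeEvent_le_one hr (.inr (.inr (.inr t)))
    · intro t _ ht
      obtain ⟨c, hc, hW⟩ := List.countP_pos_iff.1 (Nat.pos_of_ne_zero (by simpa using ht))
      exact ⟨c, hc, of_decide_eq_true hW⟩
  have hx := helem 2 .inl
  have hy := helem 3 fun y => .inr (.inl y)
  have hz := helem 2 fun z => .inr (.inr (.inl z))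
  simp only [Fintype.sum_sum_type, chargeWeight]
  omega

end Execution

/-- If every 3D-matching of the source instance has size at most
`d`, then every execution on the reduction trading graph performs at most `7n + d`
exchanges. -/
theorem stmt15 (n d : ℕ) (T : Finset (Fin n × Fin n × Fin n))
    (hmatch : ∀ S ⊆ T, IsPartialMatching S → S.card ≤ d)
    (r : List (List (RAg n × RIt n))) (hr : ValidExec ⟨RS n T, RD n T⟩ r) :
    exchanges r ≤ 7 * n + d :=
  calc exchanges r
      ≤ ∑ k, chargeWeight k * r.countP (chargeEvent k) := exchanges_le_sum_chargeWeight hr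
    _ ≤ 7 * n + (matchedTriples r).card := sum_chargeWeight_le hr
    _ ≤ 7 * n + d := Nat.add_le_add_left
        (hmatch _ (matchedTriples_subset hr) (isPartialMatching_matchedTriples hr)) _
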